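/- Let n ≥ 2, let Pₙ be the path graph on vertices Δ = {α₁,…,αₙ}, and let J ⊆ Δ. Then J is one of the following four sets — (i) J = ∅; (ii) J = {α₁,…,αᵢ} for some 1 ≤ i < n; (iii) J = {α_j,…,αₙ} for some 1 < j ≤ n; (iv) J = {α₁,…,αᵢ} ∪ {α_j,…,αₙ} with 1 ≤ i, j ≤ n and j − i ≥ 3 — if and only if Λ*(Pₙ,J) is a distributive lattice and the following hold: if J contains exactly one end node of Pₙ then |Δ − J| ≥ 1, and if J contains both end nodes of Pₙ then |Δ − J| ≥ 2. -/

import Mathlib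

/-!
On the path graph a set `U` is admissible iff every `a ∈ U` reaches some `b ∉ J` with the whole
interval `[a, b]` inside `U`. If `Δ \ J` is an interval, then `X ∩ Y` is admissible whenever `X`
and `Y` are (for `a ∈ X ∩ Y`, the median of `a` and its two witnesses is a witness), so the meet
is the intersection and `Λ*(Pₙ, J)` is distributive. If `Δ \ J` is not an interval, pick
`a < b < c` with `a, c ∉ J` and `b ∈ J`; for `X = [a, b]`, `Y = [b, c]`, `Z = [a, b)` we get
`X ⊓ (Y ⊔ Z) = X` but `X ⊓ Y = ⊥` and `X ⊓ Z = Z`. Hence distributivity says that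
`Δ \ J = [l, r]`, and the end-node conditions say that this interval is nonempty and has at
least two elements when it contains neither end node; these are exactly Renner's four forms.
-/

open SimpleGraph Finset

/-- `ReachIn G U a b` : `b` is reachable from `a` within the subgraph of `G`
induced on the vertex set `U`. -/
def ReachIn {n : ℕ} (G : SimpleGraph (Fin n)) (U : Finset (Fin n)) (a b : Fin n) : Prop :=
  Relation.ReflTransGen (fun x y => G.Adj x y ∧ x ∈ U ∧ y ∈ U) a b

/-- `U` is admissible (with respect to `J₀`) if no connected component of the
subgraph of `G` induced on `U` is entirely contained in `J₀`: every component
contains a vertex outside `J₀`. -/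
def Admissible {n : ℕ} (G : SimpleGraph (Fin n)) (J₀ U : Finset (Fin n)) : Prop :=
  ∀ a ∈ U, ∃ b, ReachIn G U a b ∧ b ∉ J₀

/-- A subset `A` is connected if the induced subgraph on `A` is connected. -/
def ConnIn {n : ℕ} (G : SimpleGraph (Fin n)) (A : Finset (Fin n)) : Prop :=
  ∀ a ∈ A, ∀ b ∈ A, ReachIn G A a b

theorem ReachIn.mono {n : ℕ} {G : SimpleGraph (Fin n)} {U V : Finset (Fin n)} (h : U ⊆ V)
    {a b : Fin n} (hr : ReachIn G U a b) : ReachIn G V a b := by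
  unfold ReachIn at *
  induction hr with
  | refl => exact Relation.ReflTransGen.refl
  | tail _ hxy ih => exact ih.tail ⟨hxy.1, h hxy.2.1, h hxy.2.2⟩

theorem admissible_empty {n : ℕ} (G : SimpleGraph (Fin n)) (J₀ : Finset (Fin n)) :
    Admissible G J₀ ∅ := fun a ha => absurd ha (Finset.notMem_empty a)

theorem admissible_union {n : ℕ} {G : SimpleGraph (Fin n)} {J₀ U V : Finset (Fin n)}
    (hU : Admissible G J₀ U) (hV : Admissible G J₀ V) : Admissible G J₀ (U ∪ V) := by
  intro a ha
  rcases Finset.mem_union.mp ha with h | h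
  · obtain ⟨b, hb, hbJ⟩ := hU a h
    exact ⟨b, hb.mono Finset.subset_union_left, hbJ⟩
  · obtain ⟨b, hb, hbJ⟩ := hV a h
    exact ⟨b, hb.mono Finset.subset_union_right, hbJ⟩

/-- `Λ*(G, J₀)` : the poset of admissible subsets, ordered by inclusion. -/
def CrossSection {n : ℕ} (G : SimpleGraph (Fin n)) (J₀ : Finset (Fin n)) : Type :=
  {U : Finset (Fin n) // Admissible G J₀ U}

namespace CrossSection

variable {n : ℕ} {G : SimpleGraph (Fin n)} {J₀ : Finset (Fin n)}

instance : PartialOrder (CrossSection G J₀) :=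
  inferInstanceAs (PartialOrder {U : Finset (Fin n) // Admissible G J₀ U})

instance : DecidableEq (CrossSection G J₀) :=
  inferInstanceAs (DecidableEq {U : Finset (Fin n) // Admissible G J₀ U})

noncomputable instance : Fintype (CrossSection G J₀) :=
  Fintype.ofInjective (Subtype.val : CrossSection G J₀ → Finset (Fin n)) Subtype.val_injective

open Classical in
/-- The underlying set of the meet of two admissible sets: the largest admissible
subset contained in the intersection. -/
noncomputable def meetFinset (G : SimpleGraph (Fin n)) (J₀ : Finset (Fin n))
    (U V : Finset (Fin n)) : Finset (Fin n) :=
  ((U ∩ V).powerset.filter (fun W => Admissible G J₀ W)).sup id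

theorem admissible_sup {s : Finset (Finset (Fin n))}
    (h : ∀ W ∈ s, Admissible G J₀ W) : Admissible G J₀ (s.sup id) :=
  Finset.sup_induction (by simpa using admissible_empty G J₀)
    (fun a ha b hb => by simpa using admissible_union ha hb) h

theorem admissible_meetFinset (G : SimpleGraph (Fin n)) (J₀ U V : Finset (Fin n)) :
    Admissible G J₀ (meetFinset G J₀ U V) := by
  classical
  exact admissible_sup (fun W hW => (Finset.mem_filter.mp hW).2)

theorem meetFinset_subset_left (G : SimpleGraph (Fin n)) (J₀ U V : Finset (Fin n)) :
    meetFinset G J₀ U V ≤ U := by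
  classical
  unfold meetFinset
  refine Finset.sup_le (fun W hW => ?_)
  have := Finset.mem_powerset.mp (Finset.mem_filter.mp hW).1
  exact fun x hx => (Finset.mem_inter.mp (this hx)).1

theorem meetFinset_subset_right (G : SimpleGraph (Fin n)) (J₀ U V : Finset (Fin n)) :
    meetFinset G J₀ U V ≤ V := by
  classical
  unfold meetFinset
  refine Finset.sup_le (fun W hW => ?_)
  have := Finset.mem_powerset.mp (Finset.mem_filter.mp hW).1
  exact fun x hx => (Finset.mem_inter.mp (this hx)).2

theorem subset_meetFinset {G : SimpleGraph (Fin n)} {J₀ U V W : Finset (Fin n)}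
    (hW : Admissible G J₀ W) (h1 : W ⊆ U) (h2 : W ⊆ V) : W ≤ meetFinset G J₀ U V := by
  classical
  unfold meetFinset
  exact Finset.le_sup (f := id)
    (Finset.mem_filter.mpr ⟨Finset.mem_powerset.mpr (Finset.subset_inter h1 h2), hW⟩)

noncomputable instance : Lattice (CrossSection G J₀) :=
  { (inferInstance : PartialOrder (CrossSection G J₀)) with
    sup := fun U V => ⟨U.1 ∪ V.1, admissible_union U.2 V.2⟩
    le_sup_left := fun U V => show U.1 ⊆ U.1 ∪ V.1 from Finset.subset_union_left
    le_sup_right := fun U V => show V.1 ⊆ U.1 ∪ V.1 from Finset.subset_union_right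
    sup_le := fun U V W h1 h2 => show U.1 ∪ V.1 ⊆ W.1 from Finset.union_subset h1 h2
    inf := fun U V => ⟨meetFinset G J₀ U.1 V.1, admissible_meetFinset G J₀ U.1 V.1⟩
    inf_le_left := fun U V => meetFinset_subset_left G J₀ U.1 V.1
    inf_le_right := fun U V => meetFinset_subset_right G J₀ U.1 V.1
    le_inf := fun W U V h1 h2 => subset_meetFinset W.2 h1 h2 }

instance : OrderBot (CrossSection G J₀) where
  bot := ⟨∅, admissible_empty G J₀⟩
  bot_le := fun U => show (∅ : Finset (Fin n)) ⊆ U.1 from Finset.empty_subset _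

@[simp] theorem sup_val (U V : CrossSection G J₀) : (U ⊔ V).1 = U.1 ∪ V.1 := rfl

@[simp] theorem inf_val (U V : CrossSection G J₀) : (U ⊓ V).1 = meetFinset G J₀ U.1 V.1 := rfl

end CrossSection

variable {n : ℕ}

theorem ReachIn.mem {G : SimpleGraph (Fin n)} {U : Finset (Fin n)} {a b : Fin n}
    (h : ReachIn G U a b) (ha : a ∈ U) : b ∈ U := by
  induction h with
  | refl => exact ha
  | tail _ hxy _ => exact hxy.2.2

theorem Admissible.eq_empty_of_subset {G : SimpleGraph (Fin n)} {J₀ U : Finset (Fin n)}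
    (hU : Admissible G J₀ U) (hJ : U ⊆ J₀) : U = ∅ :=
  Finset.eq_empty_of_forall_notMem fun a ha =>
    let ⟨_, hab, hb⟩ := hU a ha
    hb (hJ (hab.mem ha))

namespace CrossSection

variable {G : SimpleGraph (Fin n)} {J₀ : Finset (Fin n)}

theorem meetFinset_subset_inter (U V : Finset (Fin n)) : meetFinset G J₀ U V ⊆ U ∩ V :=
  Finset.subset_inter (meetFinset_subset_left ..) (meetFinset_subset_right ..)

theorem meetFinset_eq_inter {U V : Finset (Fin n)} (h : Admissible G J₀ (U ∩ V)) :
    meetFinset G J₀ U V = U ∩ V :=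
  (meetFinset_subset_inter U V).antisymm
    (subset_meetFinset h Finset.inter_subset_left Finset.inter_subset_right)

theorem inf_eq_bot_of_inter_subset {x y : CrossSection G J₀} (h : x.1 ∩ y.1 ⊆ J₀) :
    x ⊓ y = ⊥ :=
  Subtype.ext <| (admissible_meetFinset G J₀ x.1 y.1).eq_empty_of_subset <|
    (meetFinset_subset_inter x.1 y.1).trans h

end CrossSection

theorem Set.OrdConnected.exists_uIcc_subset_inter {α : Type*} [LinearOrder α] {s : Set α}
    (hs : s.OrdConnected) (a : α) {x y : α} (hx : x ∈ s) (hy : y ∈ s) :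
    ∃ z ∈ s, Set.uIcc a z ⊆ Set.uIcc a x ∩ Set.uIcc a y := by
  by_cases hxy : x ∈ Set.uIcc a y
  · exact ⟨x, hx, Set.subset_inter subset_rfl (Set.uIcc_subset_uIcc_left hxy)⟩
  by_cases hyx : y ∈ Set.uIcc a x
  · exact ⟨y, hy, Set.subset_inter (Set.uIcc_subset_uIcc_left hyx) subset_rfl⟩
  have ha : a ∈ Set.uIcc x y := by
    simp only [Set.mem_uIcc] at hxy hyx ⊢
    rcases le_total a x with h1 | h1 <;> rcases le_total a y with h2 | h2 <;>
      rcases le_total x y with h3 | h3 <;> tauto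
  exact ⟨a, hs.uIcc_subset hx hy ha, by simp⟩

theorem uIcc_eq_pair_of_pathGraph_adj {x y : Fin n} (h : (pathGraph n).Adj x y) :
    Set.uIcc x y = {x, y} := by
  rcases hasse_adj.mp h with h | h
  · rw [Set.uIcc_of_le h.le, h.Icc_eq]
  · rw [Set.uIcc_of_ge h.le, h.Icc_eq, Set.pair_comm]

theorem reachIn_pathGraph_iff {U : Finset (Fin n)} {a b : Fin n} (ha : a ∈ U) :
    ReachIn (pathGraph n) U a b ↔ Set.uIcc a b ⊆ U := by
  constructor
  · intro h
    induction h with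
    | refl => simpa using ha
    | tail _ hxy ih =>
      refine Set.uIcc_subset_uIcc_union_uIcc.trans (Set.union_subset ih ?_)
      rw [uIcc_eq_pair_of_pathGraph_adj hxy.1]
      exact Set.insert_subset hxy.2.1 (Set.singleton_subset_iff.mpr hxy.2.2)
  · intro h
    have hsucc : ∀ {p q : Fin n}, Set.Icc p q ⊆ Set.uIcc a b → ∀ i ∈ Set.Ico p q,
        (pathGraph n).Adj i (Order.succ i) ∧ i ∈ U ∧ Order.succ i ∈ U := by
      rintro p q hpq i ⟨hpi, hiq⟩
      have hcov : i ⋖ Order.succ i := Order.covBy_succ_of_not_isMax (not_isMax_of_lt hiq)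
      exact ⟨hasse_adj.mpr (Or.inl hcov), h (hpq ⟨hpi, hiq.le⟩),
        h (hpq ⟨hpi.trans hcov.le, Order.succ_le_of_lt hiq⟩)⟩
    refine reflTransGen_of_succ _ (hsucc Set.Icc_subset_uIcc) fun i hi => ?_
    obtain ⟨hadj, hi, hsi⟩ := hsucc Set.Icc_subset_uIcc' i hi
    exact ⟨hadj.symm, hsi, hi⟩

theorem admissible_pathGraph_iff {J U : Finset (Fin n)} :
    Admissible (pathGraph n) J U ↔ ∀ a ∈ U, ∃ b, Set.uIcc a b ⊆ U ∧ b ∉ J :=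
  forall₂_congr fun _ ha => exists_congr fun _ => and_congr_left' (reachIn_pathGraph_iff ha)

theorem admissible_pathGraph_of_ordConnected {J U : Finset (Fin n)}
    (hU : (U : Set (Fin n)).OrdConnected) {b : Fin n} (hb : b ∈ U) (hbJ : b ∉ J) :
    Admissible (pathGraph n) J U :=
  admissible_pathGraph_iff.mpr fun _ ha => ⟨b, hU.uIcc_subset ha hb, hbJ⟩

theorem admissible_pathGraph_inter {J X Y : Finset (Fin n)}
    (hJ : (J : Set (Fin n))ᶜ.OrdConnected) (hX : Admissible (pathGraph n) J X)
    (hY : Admissible (pathGraph n) J Y) : Admissible (pathGraph n) J (X ∩ Y) := by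
  rw [admissible_pathGraph_iff] at *
  intro a ha
  obtain ⟨x, hax, hx⟩ := hX a (Finset.mem_inter.mp ha).1
  obtain ⟨y, hay, hy⟩ := hY a (Finset.mem_inter.mp ha).2
  obtain ⟨z, hz, haz⟩ := hJ.exists_uIcc_subset_inter a hx hy
  exact ⟨z, Finset.coe_inter X Y ▸ haz.trans (Set.inter_subset_inter hax hay), hz⟩

namespace CrossSection

theorem pathGraph_distrib_of_ordConnected {J : Finset (Fin n)}
    (hJ : (J : Set (Fin n))ᶜ.OrdConnected) (x y z : CrossSection (pathGraph n) J) :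
    x ⊓ (y ⊔ z) = x ⊓ y ⊔ x ⊓ z := by
  have hinf : ∀ u v : CrossSection (pathGraph n) J, (u ⊓ v).1 = u.1 ∩ v.1 := fun u v =>
    meetFinset_eq_inter (admissible_pathGraph_inter hJ u.2 v.2)
  exact Subtype.ext <| by simp only [hinf, sup_val, Finset.inter_union_distrib_left]

theorem pathGraph_not_distrib {J : Finset (Fin n)} {a b c : Fin n} (hab : a ≤ b) (hbc : b ≤ c)
    (ha : a ∉ J) (hb : b ∈ J) (hc : c ∉ J) :
    ¬ ∀ x y z : CrossSection (pathGraph n) J, x ⊓ (y ⊔ z) = x ⊓ y ⊔ x ⊓ z := by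
  have hab' : a < b := lt_of_le_of_ne hab (by rintro rfl; exact ha hb)
  let X : CrossSection (pathGraph n) J := ⟨Finset.Icc a b, admissible_pathGraph_of_ordConnected
    (by simpa using Set.ordConnected_Icc) (Finset.left_mem_Icc.mpr hab) ha⟩
  let Y : CrossSection (pathGraph n) J := ⟨Finset.Icc b c, admissible_pathGraph_of_ordConnected
    (by simpa using Set.ordConnected_Icc) (Finset.right_mem_Icc.mpr hbc) hc⟩
  let Z : CrossSection (pathGraph n) J := ⟨Finset.Ico a b, admissible_pathGraph_of_ordConnected
    (by simpa using Set.ordConnected_Ico) (Finset.left_mem_Ico.mpr hab') ha⟩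
  have hXYZ : X ≤ Y ⊔ Z := show Finset.Icc a b ⊆ Finset.Icc b c ∪ Finset.Ico a b from
    fun v hv => by
      simp only [Finset.mem_union, Finset.mem_Icc, Finset.mem_Ico] at hv ⊢
      omega
  have hXY : X ⊓ Y = ⊥ := inf_eq_bot_of_inter_subset fun v hv => by
    simp only [X, Y, Finset.mem_inter, Finset.mem_Icc] at hv
    exact (show v = b by omega) ▸ hb
  have hXZ : X ⊓ Z = Z := inf_eq_right.mpr Finset.Ico_subset_Icc_self
  intro hd
  have hXZ' : X = Z := calc
    X = X ⊓ (Y ⊔ Z) := (inf_eq_left.mpr hXYZ).symm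
    _ = X ⊓ Y ⊔ X ⊓ Z := hd X Y Z
    _ = Z := by rw [hXY, hXZ, bot_sup_eq]
  have hbZ : b ∈ Z.1 := hXZ' ▸ Finset.right_mem_Icc.mpr hab
  simp [Z] at hbZ

theorem pathGraph_distrib_iff {J : Finset (Fin n)} :
    (∀ x y z : CrossSection (pathGraph n) J, x ⊓ (y ⊔ z) = x ⊓ y ⊔ x ⊓ z) ↔
      (J : Set (Fin n))ᶜ.OrdConnected := by
  refine ⟨fun hd => ⟨fun a ha c hc b hb => ?_⟩, pathGraph_distrib_of_ordConnected⟩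
  by_contra hbJ
  exact pathGraph_not_distrib hb.1 hb.2 ha (by simpa using hbJ) hc hd

end CrossSection

theorem ordConnected_compl_and_exists_notMem_iff {J : Finset (Fin n)} :
    ((J : Set (Fin n))ᶜ.OrdConnected ∧ ∃ x, x ∉ J) ↔
      ∃ l r : ℕ, l ≤ r ∧ r < n ∧ ∀ x : Fin n, x ∈ J ↔ x.val < l ∨ r < x.val := by
  constructor
  · rintro ⟨hJ, x, hx⟩
    have hne : Jᶜ.Nonempty := ⟨x, Finset.mem_compl.mpr hx⟩
    have hmin := Finset.mem_compl.mp (Jᶜ.min'_mem hne)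
    have hmax := Finset.mem_compl.mp (Jᶜ.max'_mem hne)
    refine ⟨(Jᶜ.min' hne).val, (Jᶜ.max' hne).val, Jᶜ.min'_le _ (Jᶜ.max'_mem hne),
      (Jᶜ.max' hne).isLt, fun y => ⟨fun hy => ?_, fun hy => by_contra fun hyJ => ?_⟩⟩
    · by_contra h
      push Not at h
      exact hJ.out hmin hmax ⟨h.1, h.2⟩ hy
    · have h1 := Jᶜ.min'_le y (Finset.mem_compl.mpr hyJ)
      have h2 := Jᶜ.le_max' y (Finset.mem_compl.mpr hyJ)
      omega
  · rintro ⟨l, r, hlr, hr, hJ⟩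
    refine ⟨⟨fun x hx y hy z hz => ?_⟩, ⟨⟨l, by omega⟩, by simp [hJ, hlr]⟩⟩
    simp only [Set.mem_compl_iff, Finset.mem_coe, hJ, Set.mem_Icc] at hx hy hz ⊢
    omega

theorem renner_forms_iff {J : Finset (Fin n)} (hn : 0 < n) :
    (J = ∅ ∨
     (∃ i : ℕ, 1 ≤ i ∧ i < n ∧
        J = Finset.univ.filter (fun x : Fin n => x.val + 1 ≤ i)) ∨
     (∃ j : ℕ, 1 < j ∧ j ≤ n ∧
        J = Finset.univ.filter (fun x : Fin n => j ≤ x.val + 1)) ∨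
     (∃ i j : ℕ, 1 ≤ i ∧ i ≤ n ∧ 1 ≤ j ∧ j ≤ n ∧ i + 3 ≤ j ∧
        J = Finset.univ.filter (fun x : Fin n => x.val + 1 ≤ i ∨ j ≤ x.val + 1))) ↔
    ∃ l r : ℕ, l ≤ r ∧ r < n ∧ (0 < l → r + 1 < n → l < r) ∧
      ∀ x : Fin n, x ∈ J ↔ x.val < l ∨ r < x.val := by
  constructor
  · rintro (rfl | ⟨i, hi, hin, rfl⟩ | ⟨j, hj, hjn, rfl⟩ |
      ⟨i, j, hi, hin, hj, hjn, hij, rfl⟩)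
    · exact ⟨0, n - 1, by omega, by omega, by omega, fun x => by simp; omega⟩
    · exact ⟨i, n - 1, by omega, by omega, by omega, fun x => by rw [mem_filter_univ]; omega⟩
    · exact ⟨0, j - 2, by omega, by omega, by omega, fun x => by rw [mem_filter_univ]; omega⟩
    · exact ⟨i, j - 2, by omega, by omega, by omega, fun x => by rw [mem_filter_univ]; omega⟩
  · rintro ⟨l, r, hlr, hr, hlr', hJ⟩
    rcases Nat.eq_zero_or_pos l with rfl | hl <;>
      rcases (show r + 1 = n ∨ r + 1 < n by omega) with hr' | hr'
    · left
      ext x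
      simp only [hJ, Finset.notMem_empty, iff_false]
      omega
    · right; right; left
      exact ⟨r + 2, by omega, by omega, by ext x; rw [hJ, mem_filter_univ]; omega⟩
    · right; left
      exact ⟨l, by omega, by omega, by ext x; rw [hJ, mem_filter_univ]; omega⟩
    · right; right; right
      exact ⟨l, r + 2, by omega, by omega, by omega, by omega, by omega,
        by ext x; rw [hJ, mem_filter_univ]; omega⟩

theorem ordConnected_and_endNode_iff {J : Finset (Fin n)} (hn : 0 < n) :
    ((J : Set (Fin n))ᶜ.OrdConnected ∧
     ((((⟨0, by omega⟩ : Fin n) ∈ J ∧ (⟨n - 1, by omega⟩ : Fin n) ∉ J) ∨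
       ((⟨0, by omega⟩ : Fin n) ∉ J ∧ (⟨n - 1, by omega⟩ : Fin n) ∈ J) →
         1 ≤ (Finset.univ \ J).card) ∧
      (((⟨0, by omega⟩ : Fin n) ∈ J ∧ (⟨n - 1, by omega⟩ : Fin n) ∈ J) →
         2 ≤ (Finset.univ \ J).card))) ↔
    ∃ l r : ℕ, l ≤ r ∧ r < n ∧ (0 < l → r + 1 < n → l < r) ∧
      ∀ x : Fin n, x ∈ J ↔ x.val < l ∨ r < x.val := by
  constructor
  · rintro ⟨hJ, -, htwo⟩
    have hne : ∃ x, x ∉ J := by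
      by_contra! h
      have hempty : Finset.univ \ J = ∅ := Finset.sdiff_eq_empty_iff_subset.mpr fun x _ => h x
      have := htwo ⟨h _, h _⟩
      simp [hempty] at this
    obtain ⟨l, r, hlr, hr, hJlr⟩ := ordConnected_compl_and_exists_notMem_iff.mp ⟨hJ, hne⟩
    refine ⟨l, r, hlr, hr, fun hl hr' => ?_, hJlr⟩
    obtain ⟨u, hu, v, hv, huv⟩ := Finset.one_lt_card.mp
      (htwo ⟨(hJlr _).mpr (by simp only [Fin.val_mk]; omega),
        (hJlr _).mpr (by simp only [Fin.val_mk]; omega)⟩)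
    simp only [Finset.mem_sdiff, Finset.mem_univ, true_and, hJlr] at hu hv
    omega
  · rintro ⟨l, r, hlr, hr, hlr', hJ⟩
    have hl : (⟨l, by omega⟩ : Fin n) ∉ J := by simp [hJ, hlr]
    refine ⟨(ordConnected_compl_and_exists_notMem_iff.mpr ⟨l, r, hlr, hr, hJ⟩).1,
      fun _ => Finset.card_pos.mpr ⟨_, by simpa using hl⟩, fun ⟨h0, h1⟩ => ?_⟩
    simp only [hJ] at h0 h1
    exact Finset.one_lt_card.mpr
      ⟨_, by simpa using hl, ⟨r, hr⟩, by simp [hJ, hlr],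
        by simp only [ne_eq, Fin.mk.injEq]; omega⟩

theorem stmt_13 (n : ℕ) (hn : 2 ≤ n) (J : Finset (Fin n)) :
    (J = ∅ ∨
     (∃ i : ℕ, 1 ≤ i ∧ i < n ∧
        J = Finset.univ.filter (fun x : Fin n => x.val + 1 ≤ i)) ∨
     (∃ j : ℕ, 1 < j ∧ j ≤ n ∧
        J = Finset.univ.filter (fun x : Fin n => j ≤ x.val + 1)) ∨
     (∃ i j : ℕ, 1 ≤ i ∧ i ≤ n ∧ 1 ≤ j ∧ j ≤ n ∧ i + 3 ≤ j ∧
        J = Finset.univ.filter (fun x : Fin n => x.val + 1 ≤ i ∨ j ≤ x.val + 1))) ↔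
    ((∀ x y z : CrossSection (pathGraph n) J, x ⊓ (y ⊔ z) = (x ⊓ y) ⊔ (x ⊓ z)) ∧
     ((((⟨0, by omega⟩ : Fin n) ∈ J ∧ (⟨n - 1, by omega⟩ : Fin n) ∉ J) ∨
       ((⟨0, by omega⟩ : Fin n) ∉ J ∧ (⟨n - 1, by omega⟩ : Fin n) ∈ J) →
         1 ≤ (Finset.univ \ J).card) ∧
      (((⟨0, by omega⟩ : Fin n) ∈ J ∧ (⟨n - 1, by omega⟩ : Fin n) ∈ J) →
         2 ≤ (Finset.univ \ J).card))) := by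
  rw [renner_forms_iff (by omega), CrossSection.pathGraph_distrib_iff,
    ordConnected_and_endNode_iff (by omega)]
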